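/- The trigonometric Dunkl (Cherednik) operators pairwise commute: for all i, j ∈ {1,…,n}, Uᵢ ∘ Uⱼ = Uⱼ ∘ Uᵢ as 𝔽-linear endomorphisms of 𝔽[x₁,…,xₙ]. -/

import Mathlib

open MvPolynomial

noncomputable section

variable (F : Type) [Field F] [CharZero F] {n : ℕ}

/-- The action of a permutation `w` on polynomials, permuting the variables. -/
def permOp (w : Equiv.Perm (Fin n)) : Module.End F (MvPolynomial (Fin n) F) :=
  (MvPolynomial.rename (⇑w)).toLinearMap

/-- The operator exchanging the variables `xᵢ` and `xⱼ`. -/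
def swapOp (i j : Fin n) : Module.End F (MvPolynomial (Fin n) F) :=
  permOp F (Equiv.swap i j)

theorem delta_existsUnique (i j : Fin n) (hij : i ≠ j) (f : MvPolynomial (Fin n) F) :
    ∃! g : MvPolynomial (Fin n) F,
      (X i - X j) * g = f - MvPolynomial.rename (⇑(Equiv.swap i j)) f := by
  have hne : (X i - X j : MvPolynomial (Fin n) F) ≠ 0 :=
    sub_ne_zero_of_ne (fun h => hij (MvPolynomial.X_injective h))
  have hex : ∃ g : MvPolynomial (Fin n) F,
      (X i - X j) * g = f - MvPolynomial.rename (⇑(Equiv.swap i j)) f := by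
    induction f using MvPolynomial.induction_on with
    | C a => exact ⟨0, by simp⟩
    | add p q hp hq =>
      obtain ⟨g1, h1⟩ := hp
      obtain ⟨g2, h2⟩ := hq
      exact ⟨g1 + g2, by rw [map_add]; linear_combination h1 + h2⟩
    | mul_X p k hp =>
      obtain ⟨g, hg⟩ := hp
      have hren : MvPolynomial.rename (⇑(Equiv.swap i j)) (p * X k) =
          MvPolynomial.rename (⇑(Equiv.swap i j)) p * X (Equiv.swap i j k) := by
        simp
      rcases eq_or_ne k i with rfl | hki
      · refine ⟨p + g * X j, ?_⟩
        rw [hren, Equiv.swap_apply_left]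
        linear_combination X j * hg
      rcases eq_or_ne k j with rfl | hkj
      · refine ⟨-p + g * X i, ?_⟩
        rw [hren, Equiv.swap_apply_right]
        linear_combination X i * hg
      · refine ⟨g * X k, ?_⟩
        rw [hren, Equiv.swap_apply_of_ne_of_ne hki hkj]
        linear_combination X k * hg
  obtain ⟨g, hg⟩ := hex
  exact ⟨g, hg, fun y hy => mul_left_cancel₀ hne (hy.trans hg.symm)⟩

/-- The divided-difference operator `Δ_{ij} = (xᵢ - xⱼ)⁻¹ (1 - s_{ij})`. -/
def Delta (i j : Fin n) : Module.End F (MvPolynomial (Fin n) F) where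
  toFun f :=
    if h : i ≠ j then (delta_existsUnique F i j h f).exists.choose else 0
  map_add' f g := by
    by_cases h : i ≠ j
    · simp only [dif_pos h]
      apply (delta_existsUnique F i j h (f + g)).unique
      · exact (delta_existsUnique F i j h (f + g)).exists.choose_spec
      · rw [mul_add, (delta_existsUnique F i j h f).exists.choose_spec,
          (delta_existsUnique F i j h g).exists.choose_spec, map_add]
        ring
    · simp [dif_neg h]
  map_smul' c f := by
    by_cases h : i ≠ j
    · simp only [dif_pos h, RingHom.id_apply]
      apply (delta_existsUnique F i j h (c • f)).unique
      · exact (delta_existsUnique F i j h (c • f)).exists.choose_spec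
      · rw [Algebra.mul_smul_comm, (delta_existsUnique F i j h f).exists.choose_spec,
          map_smul, smul_sub]
    · simp [dif_neg h]

/-- The Dunkl operator `Yᵢ = κ ∂ᵢ + Σ_{j ≠ i} Δ_{ij}`. -/
def Dunkl (κ : F) (i : Fin n) : Module.End F (MvPolynomial (Fin n) F) :=
  κ • (MvPolynomial.pderiv i).toLinearMap + ∑ j ∈ Finset.univ.erase i, Delta F i j

/-- The trigonometric Dunkl (Cherednik) operator `Uᵢ = xᵢ Yᵢ + Σ_{j < i} s_{ji}`. -/
def Cher (κ : F) (i : Fin n) : Module.End F (MvPolynomial (Fin n) F) :=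
  LinearMap.mulLeft F (X i) * Dunkl F κ i +
    ∑ j ∈ Finset.univ.filter (fun j => j < i), swapOp F j i

section Aux
set_option linter.unusedSectionVars false

variable {F}

lemma X_sub_ne {i j : Fin n} (hij : i ≠ j) :
    (X i - X j : MvPolynomial (Fin n) F) ≠ 0 :=
  sub_ne_zero_of_ne fun h => hij (MvPolynomial.X_injective h)

lemma delta_spec {i j : Fin n} (hij : i ≠ j) (f : MvPolynomial (Fin n) F) :
    (X i - X j) * Delta F i j f = f - rename (⇑(Equiv.swap i j)) f := by
  show (X i - X j) * (if h : i ≠ j then (delta_existsUnique F i j h f).exists.choose else 0) = _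
  rw [dif_pos hij]
  exact (delta_existsUnique F i j hij f).exists.choose_spec

lemma delta_eq {i j : Fin n} (hij : i ≠ j) {f g : MvPolynomial (Fin n) F}
    (h : (X i - X j) * g = f - rename (⇑(Equiv.swap i j)) f) :
    Delta F i j f = g :=
  (delta_existsUnique F i j hij f).unique (delta_spec hij f) h

lemma delta_self (i : Fin n) : Delta F i i = (0 : Module.End F (MvPolynomial (Fin n) F)) := by
  refine LinearMap.ext fun f => ?_
  show (if h : i ≠ i then (delta_existsUnique F i i h f).exists.choose else 0) = _
  simp

lemma delta_antisymm (i j : Fin n) : Delta F j i = - Delta F i j := by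
  rcases eq_or_ne i j with rfl | hij
  · rw [delta_self]; simp
  refine LinearMap.ext fun f => ?_
  refine delta_eq hij.symm ?_
  rw [Equiv.swap_comm]
  show (X j - X i) * (-(Delta F i j f)) = _
  linear_combination delta_spec hij f

lemma permOp_apply (w : Equiv.Perm (Fin n)) (f : MvPolynomial (Fin n) F) :
    permOp F w f = rename (⇑w) f := rfl

lemma permOp_mul (w v : Equiv.Perm (Fin n)) :
    permOp F w * permOp F v = permOp F (w * v) := by
  refine LinearMap.ext fun f => ?_
  simp only [Module.End.mul_apply, permOp_apply, rename_rename, Equiv.Perm.coe_mul]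

lemma permOp_one : permOp F (1 : Equiv.Perm (Fin n)) = 1 := by
  refine LinearMap.ext fun f => ?_
  simp only [permOp_apply, Equiv.Perm.coe_one, Module.End.one_apply]
  exact congrArg (fun g => g f) rename_id

lemma permOp_mulLeft (w : Equiv.Perm (Fin n)) (p : MvPolynomial (Fin n) F) :
    permOp F w * LinearMap.mulLeft F p = LinearMap.mulLeft F (rename (⇑w) p) * permOp F w := by
  refine LinearMap.ext fun f => ?_
  simp only [Module.End.mul_apply, permOp_apply, LinearMap.mulLeft_apply, map_mul]

lemma permOp_delta (w : Equiv.Perm (Fin n)) (i j : Fin n) :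
    permOp F w * Delta F i j = Delta F (w i) (w j) * permOp F w := by
  rcases eq_or_ne i j with rfl | hij
  · rw [delta_self, delta_self]; simp
  have hswap : Equiv.swap (w i) (w j) * w = w * Equiv.swap i j := by
    rw [Equiv.swap_apply_apply]; group
  refine LinearMap.ext fun f => ?_
  simp only [Module.End.mul_apply, permOp_apply]
  refine (delta_eq (fun h => hij (w.injective h)) ?_).symm
  have h3 := congrArg (rename (⇑w)) (delta_spec hij f)
  simp only [map_mul, map_sub, rename_X, rename_rename, ← Equiv.Perm.coe_mul] at h3
  rw [← hswap, Equiv.Perm.coe_mul, ← rename_rename] at h3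
  exact h3

lemma permOp_pderiv (w : Equiv.Perm (Fin n)) (i : Fin n) :
    permOp F w * (MvPolynomial.pderiv i).toLinearMap
      = (MvPolynomial.pderiv (w i)).toLinearMap * permOp F w := by
  refine LinearMap.ext fun f => ?_
  simp only [Module.End.mul_apply, permOp_apply, Derivation.coeFn_coe]
  exact (pderiv_rename w.injective i f).symm

lemma swapOp_mulLeft_X (i j k : Fin n) :
    swapOp F i j * LinearMap.mulLeft F (X k)
      = LinearMap.mulLeft F (X (Equiv.swap i j k)) * swapOp F i j := by
  rw [swapOp, permOp_mulLeft, rename_X]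

lemma dunkl_eq (κ : F) (i : Fin n) :
    Dunkl F κ i = κ • (MvPolynomial.pderiv i).toLinearMap + ∑ j : Fin n, Delta F i j := by
  rw [Dunkl, Finset.sum_erase _ (delta_self i)]

lemma permOp_dunkl (w : Equiv.Perm (Fin n)) (κ : F) (i : Fin n) :
    permOp F w * Dunkl F κ i = Dunkl F κ (w i) * permOp F w := by
  rw [dunkl_eq, dunkl_eq, mul_add, add_mul, Finset.mul_sum, Finset.sum_mul]
  congr 1
  · rw [mul_smul_comm, smul_mul_assoc, permOp_pderiv]
  · rw [← Equiv.sum_comp w (fun j => Delta F (w i) j * permOp F w)]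
    exact Finset.sum_congr rfl fun j _ => permOp_delta w i j

lemma swapOp_dunkl_other {i j k : Fin n} (hki : k ≠ i) (hkj : k ≠ j) (κ : F) :
    swapOp F i j * Dunkl F κ k = Dunkl F κ k * swapOp F i j := by
  have := permOp_dunkl (Equiv.swap i j) κ k
  rwa [Equiv.swap_apply_of_ne_of_ne hki hkj] at this

lemma swapOp_dunkl_left (i j : Fin n) (κ : F) :
    swapOp F i j * Dunkl F κ i = Dunkl F κ j * swapOp F i j := by
  have := permOp_dunkl (Equiv.swap i j) κ i
  rwa [Equiv.swap_apply_left] at this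

lemma pderiv_pderiv_comm (i j : Fin n) (f : MvPolynomial (Fin n) F) :
    pderiv i (pderiv j f) = pderiv j (pderiv i f) := by
  induction f using MvPolynomial.induction_on with
  | C a => simp
  | add p q hp hq => simp [hp, hq]
  | mul_X p k hp =>
    simp only [pderiv_mul, pderiv_X, map_add, hp, Pi.single_apply]
    split_ifs <;> simp [hp] <;> ring

lemma rename_delta (w : Equiv.Perm (Fin n)) (i j : Fin n) (f : MvPolynomial (Fin n) F) :
    rename (⇑w) (Delta F i j f) = Delta F (w i) (w j) (rename (⇑w) f) := by
  have := LinearMap.congr_fun (permOp_delta w i j) f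
  simpa only [Module.End.mul_apply, permOp_apply] using this

lemma delta_antisymm_pt (i j : Fin n) (f : MvPolynomial (Fin n) F) :
    Delta F j i f = -(Delta F i j f) := by
  rw [delta_antisymm]; rfl

lemma pderiv_delta_other {i j k : Fin n} (hki : k ≠ i) (hkj : k ≠ j)
    (f : MvPolynomial (Fin n) F) :
    pderiv k (Delta F i j f) = Delta F i j (pderiv k f) := by
  rcases eq_or_ne i j with rfl | hij
  · rw [delta_self]; simp
  refine (delta_eq hij ?_).symm
  have h0 : pderiv k ((X i - X j : MvPolynomial (Fin n) F)) = 0 := by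
    simp [pderiv_X, Pi.single_apply, hki, hkj]
  have h2 : pderiv k (rename (⇑(Equiv.swap i j)) f)
      = rename (⇑(Equiv.swap i j)) (pderiv k f) := by
    have := pderiv_rename (Equiv.injective (Equiv.swap i j)) k f
    rwa [Equiv.swap_apply_of_ne_of_ne hki hkj] at this
  have h1 := congrArg (pderiv k) (delta_spec hij f)
  rw [pderiv_mul, h0, zero_mul, zero_add, map_sub, h2] at h1
  exact h1

lemma pderiv_sum_delta {i j : Fin n} (hij : i ≠ j) (f : MvPolynomial (Fin n) F) :
    pderiv i (Delta F i j f) + pderiv j (Delta F i j f)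
      = Delta F i j (pderiv i f + pderiv j f) := by
  refine (delta_eq hij ?_).symm
  have hXi : pderiv i ((X i - X j : MvPolynomial (Fin n) F)) = 1 := by
    simp [pderiv_X, Pi.single_apply, hij.symm]
  have hXj : pderiv j ((X i - X j : MvPolynomial (Fin n) F)) = -1 := by
    simp [pderiv_X, Pi.single_apply, hij]
  have hC : pderiv i (rename (⇑(Equiv.swap i j)) f)
      = rename (⇑(Equiv.swap i j)) (pderiv j f) := by
    have := pderiv_rename (Equiv.injective (Equiv.swap i j)) j f
    rwa [Equiv.swap_apply_right] at this
  have hD : pderiv j (rename (⇑(Equiv.swap i j)) f)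
      = rename (⇑(Equiv.swap i j)) (pderiv i f) := by
    have := pderiv_rename (Equiv.injective (Equiv.swap i j)) i f
    rwa [Equiv.swap_apply_left] at this
  have hA := congrArg (pderiv i) (delta_spec hij f)
  have hB := congrArg (pderiv j) (delta_spec hij f)
  rw [pderiv_mul, hXi, map_sub, hC] at hA
  rw [pderiv_mul, hXj, map_sub, hD] at hB
  rw [map_add]
  linear_combination hA + hB

lemma delta_X_mul_other {i j k : Fin n} (hij : i ≠ j) (hki : k ≠ i) (hkj : k ≠ j)
    (f : MvPolynomial (Fin n) F) :
    Delta F i j (X k * f) = X k * Delta F i j f := by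
  refine delta_eq hij ?_
  have hr : rename (⇑(Equiv.swap i j)) (X k * f)
      = X k * rename (⇑(Equiv.swap i j)) f := by
    rw [map_mul, rename_X, Equiv.swap_apply_of_ne_of_ne hki hkj]
  rw [hr]
  linear_combination X k * delta_spec hij f

lemma delta_X_mul_left {i j : Fin n} (hij : i ≠ j) (f : MvPolynomial (Fin n) F) :
    Delta F i j (X i * f) = X i * Delta F i j f + rename (⇑(Equiv.swap i j)) f := by
  refine delta_eq hij ?_
  have hr : rename (⇑(Equiv.swap i j)) (X i * f)
      = X j * rename (⇑(Equiv.swap i j)) f := by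
    rw [map_mul, rename_X, Equiv.swap_apply_left]
  rw [hr]
  linear_combination X i * delta_spec hij f

lemma delta_X_mul_right {i j : Fin n} (hij : i ≠ j) (f : MvPolynomial (Fin n) F) :
    Delta F i j (X j * f) = X j * Delta F i j f - rename (⇑(Equiv.swap i j)) f := by
  refine delta_eq hij ?_
  have hr : rename (⇑(Equiv.swap i j)) (X j * f)
      = X i * rename (⇑(Equiv.swap i j)) f := by
    rw [map_mul, rename_X, Equiv.swap_apply_right]
  rw [hr]
  linear_combination X j * delta_spec hij f

lemma mulLeft_X_comm (p q : MvPolynomial (Fin n) F) :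
    LinearMap.mulLeft F p * LinearMap.mulLeft F q
      = LinearMap.mulLeft F q * LinearMap.mulLeft F p := by
  refine LinearMap.ext fun f => ?_
  simp only [Module.End.mul_apply, LinearMap.mulLeft_apply, mul_left_comm]

lemma dunkl_mulLeft_ne {i j : Fin n} (hij : i ≠ j) (κ : F) :
    Dunkl F κ i * LinearMap.mulLeft F (X j)
      = LinearMap.mulLeft F (X j) * Dunkl F κ i - swapOp F i j := by
  refine LinearMap.ext fun f => ?_
  simp only [dunkl_eq, Module.End.mul_apply, LinearMap.sub_apply, LinearMap.add_apply,
    LinearMap.smul_apply, LinearMap.sum_apply, LinearMap.mulLeft_apply,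
    Derivation.coeFn_coe, swapOp, permOp_apply]
  have hd : pderiv i (X j * f) = X j * pderiv i f := by
    rw [pderiv_mul, pderiv_X, Pi.single_eq_of_ne (Ne.symm hij)]
    ring
  have hs : ∀ k : Fin n, Delta F i k (X j * f)
      = X j * Delta F i k f + (if k = j then -(rename (⇑(Equiv.swap i j)) f) else 0) := by
    intro k
    rcases eq_or_ne k j with rfl | hkj
    · rw [if_pos rfl, delta_X_mul_right hij]; ring
    rcases eq_or_ne k i with rfl | hki
    · rw [if_neg hkj, delta_self]; simp
    · rw [if_neg hkj, delta_X_mul_other (Ne.symm hki) hij.symm hkj.symm]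
      ring
  have hsum : (∑ k : Fin n, Delta F i k (X j * f))
      = X j * (∑ k : Fin n, Delta F i k f) - rename (⇑(Equiv.swap i j)) f := by
    rw [Finset.sum_congr rfl fun k _ => hs k, Finset.sum_add_distrib, ← Finset.mul_sum]
    simp only [Finset.sum_ite_eq', Finset.mem_univ, if_pos]
    ring
  rw [hd, hsum]
  simp only [smul_eq_C_mul]
  ring

lemma dunkl_mulLeft_self (i : Fin n) (κ : F) :
    Dunkl F κ i * LinearMap.mulLeft F (X i)
      = LinearMap.mulLeft F (X i) * Dunkl F κ i + κ • (1 : Module.End F (MvPolynomial (Fin n) F))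
        + ∑ k ∈ Finset.univ.erase i, swapOp F i k := by
  refine LinearMap.ext fun f => ?_
  simp only [dunkl_eq, Module.End.mul_apply, LinearMap.add_apply, LinearMap.smul_apply,
    LinearMap.sum_apply, LinearMap.mulLeft_apply, Derivation.coeFn_coe, swapOp, permOp_apply,
    Module.End.one_apply]
  have hd : pderiv i (X i * f) = f + X i * pderiv i f := by
    rw [pderiv_mul, pderiv_X, Pi.single_eq_same]
    ring
  have hs : ∀ k : Fin n, Delta F i k (X i * f)
      = X i * Delta F i k f + (if k = i then 0 else rename (⇑(Equiv.swap i k)) f) := by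
    intro k
    rcases eq_or_ne k i with rfl | hki
    · rw [if_pos rfl, delta_self]; simp
    · rw [if_neg hki, delta_X_mul_left (Ne.symm hki)]
  have hsum : (∑ k : Fin n, Delta F i k (X i * f))
      = X i * (∑ k : Fin n, Delta F i k f)
        + ∑ k ∈ Finset.univ.erase i, rename (⇑(Equiv.swap i k)) f := by
    rw [Finset.sum_congr rfl fun k _ => hs k, Finset.sum_add_distrib, ← Finset.mul_sum]
    congr 1
    rw [← Finset.sum_erase (Finset.univ)
      (f := fun k => if k = i then 0 else rename (⇑(Equiv.swap i k)) f) (if_pos rfl)]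
    exact Finset.sum_congr rfl fun k hk => if_neg (Finset.ne_of_mem_erase hk)
  rw [hd, hsum]
  simp only [smul_eq_C_mul]
  ring

lemma swap_conj (w : Equiv.Perm (Fin n)) (x y : Fin n) :
    w * Equiv.swap x y = Equiv.swap (w x) (w y) * w := by
  rw [Equiv.swap_apply_apply]; group

lemma swap_comm_disjoint {a b c d : Fin n} (hca : c ≠ a) (hcb : c ≠ b)
    (hda : d ≠ a) (hdb : d ≠ b) :
    Equiv.swap a b * Equiv.swap c d = Equiv.swap c d * Equiv.swap a b := by
  have h := swap_conj (Equiv.swap a b) c d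
  rwa [Equiv.swap_apply_of_ne_of_ne hca hcb, Equiv.swap_apply_of_ne_of_ne hda hdb] at h

lemma delta_comm_disjoint {a b c d : Fin n} (hca : c ≠ a) (hcb : c ≠ b)
    (hda : d ≠ a) (hdb : d ≠ b) :
    Delta F a b * Delta F c d = Delta F c d * Delta F a b := by
  rcases eq_or_ne a b with rfl | hab
  · rw [delta_self]; simp
  rcases eq_or_ne c d with rfl | hcd
  · rw [delta_self]; simp
  refine LinearMap.ext fun f => ?_
  simp only [Module.End.mul_apply]
  have hswap : rename (⇑(Equiv.swap c d)) (rename (⇑(Equiv.swap a b)) f)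
      = rename (⇑(Equiv.swap a b)) (rename (⇑(Equiv.swap c d)) f) := by
    rw [rename_rename, rename_rename, ← Equiv.Perm.coe_mul, ← Equiv.Perm.coe_mul,
      ← swap_comm_disjoint hca hcb hda hdb]
  have E1 := delta_spec hab (Delta F c d f)
  rw [rename_delta, Equiv.swap_apply_of_ne_of_ne hca hcb,
    Equiv.swap_apply_of_ne_of_ne hda hdb] at E1
  have E2 := delta_spec hcd f
  have E3 := delta_spec hcd (rename (⇑(Equiv.swap a b)) f)
  have E4 := delta_spec hcd (Delta F a b f)
  rw [rename_delta, Equiv.swap_apply_of_ne_of_ne (Ne.symm hca) (Ne.symm hda),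
    Equiv.swap_apply_of_ne_of_ne (Ne.symm hcb) (Ne.symm hdb)] at E4
  have E5 := delta_spec hab f
  have E6 := delta_spec hab (rename (⇑(Equiv.swap c d)) f)
  rw [← hswap] at E6
  have key : ((X a - X b) * (X c - X d)) * (Delta F a b (Delta F c d f))
      = ((X a - X b) * (X c - X d)) * (Delta F c d (Delta F a b f)) := by
    linear_combination (X c - X d) * E1 + E2 - E3 - (X a - X b) * E4 - E5 + E6
  exact mul_left_cancel₀ (mul_ne_zero (X_sub_ne hab) (X_sub_ne hcd)) key

lemma endMulNeg (A B : Module.End F (MvPolynomial (Fin n) F)) : A * -B = -(A * B) :=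
  mul_neg A B

lemma endNegMul (A B : Module.End F (MvPolynomial (Fin n) F)) : -A * B = -(A * B) :=
  neg_mul A B

lemma delta_triple {a b c : Fin n} (hab : a ≠ b) (hac : a ≠ c) (hbc : b ≠ c) :
    (Delta F a b * Delta F b c - Delta F b c * Delta F a b)
      + (Delta F a b * Delta F a c - Delta F a c * Delta F a b)
      + (Delta F a c * Delta F b c - Delta F b c * Delta F a c) = 0 := by
  have P4 : Equiv.swap a b * Equiv.swap b c = Equiv.swap a c * Equiv.swap a b := by
    rw [swap_conj (Equiv.swap a b) b c, Equiv.swap_apply_right,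
      Equiv.swap_apply_of_ne_of_ne (Ne.symm hac) (Ne.symm hbc)]
  have P3 : Equiv.swap a b * Equiv.swap a c = Equiv.swap b c * Equiv.swap a b := by
    rw [swap_conj (Equiv.swap a b) a c, Equiv.swap_apply_left,
      Equiv.swap_apply_of_ne_of_ne (Ne.symm hac) (Ne.symm hbc)]
  have P2 : Equiv.swap b c * Equiv.swap a c = Equiv.swap a c * Equiv.swap a b := by
    have h : Equiv.swap b c * Equiv.swap a c = Equiv.swap a b * Equiv.swap b c := by
      rw [swap_conj (Equiv.swap b c) a c, Equiv.swap_apply_of_ne_of_ne hab hac,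
        Equiv.swap_apply_right]
    rw [h, P4]
  have P1 : Equiv.swap a c * Equiv.swap b c = Equiv.swap b c * Equiv.swap a b := by
    have h : Equiv.swap a c * Equiv.swap b c = Equiv.swap a b * Equiv.swap a c := by
      rw [swap_conj (Equiv.swap a c) b c, Equiv.swap_apply_of_ne_of_ne (Ne.symm hab) hbc,
        Equiv.swap_apply_right, Equiv.swap_comm b a]
    rw [h, P3]
  refine LinearMap.ext fun f => ?_
  simp only [LinearMap.add_apply, LinearMap.sub_apply, Module.End.mul_apply,
    LinearMap.zero_apply]
  have W1 : rename (⇑(Equiv.swap a c)) (rename (⇑(Equiv.swap b c)) f)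
      = rename (⇑(Equiv.swap b c)) (rename (⇑(Equiv.swap a b)) f) := by
    rw [rename_rename, rename_rename, ← Equiv.Perm.coe_mul, ← Equiv.Perm.coe_mul, P1]
  have W2 : rename (⇑(Equiv.swap b c)) (rename (⇑(Equiv.swap a c)) f)
      = rename (⇑(Equiv.swap a c)) (rename (⇑(Equiv.swap a b)) f) := by
    rw [rename_rename, rename_rename, ← Equiv.Perm.coe_mul, ← Equiv.Perm.coe_mul, P2]
  have W3 : rename (⇑(Equiv.swap a b)) (rename (⇑(Equiv.swap a c)) f)
      = rename (⇑(Equiv.swap b c)) (rename (⇑(Equiv.swap a b)) f) := by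
    rw [rename_rename, rename_rename, ← Equiv.Perm.coe_mul, ← Equiv.Perm.coe_mul, P3]
  have W4 : rename (⇑(Equiv.swap a b)) (rename (⇑(Equiv.swap b c)) f)
      = rename (⇑(Equiv.swap a c)) (rename (⇑(Equiv.swap a b)) f) := by
    rw [rename_rename, rename_rename, ← Equiv.Perm.coe_mul, ← Equiv.Perm.coe_mul, P4]
  have O1 := delta_spec hab (Delta F b c f)
  rw [rename_delta, Equiv.swap_apply_right,
    Equiv.swap_apply_of_ne_of_ne (Ne.symm hac) (Ne.symm hbc)] at O1
  have O2 := delta_spec hbc (Delta F a b f)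
  rw [rename_delta, Equiv.swap_apply_of_ne_of_ne hab hac, Equiv.swap_apply_left] at O2
  have O3 := delta_spec hab (Delta F a c f)
  rw [rename_delta, Equiv.swap_apply_left,
    Equiv.swap_apply_of_ne_of_ne (Ne.symm hac) (Ne.symm hbc)] at O3
  have O4 := delta_spec hac (Delta F a b f)
  rw [rename_delta, Equiv.swap_apply_left,
    Equiv.swap_apply_of_ne_of_ne (Ne.symm hab) hbc, delta_antisymm_pt b c] at O4
  have O5 := delta_spec hac (Delta F b c f)
  rw [rename_delta, Equiv.swap_apply_of_ne_of_ne (Ne.symm hab) hbc,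
    Equiv.swap_apply_right, delta_antisymm_pt a b] at O5
  have O6 := delta_spec hbc (Delta F a c f)
  rw [rename_delta, Equiv.swap_apply_of_ne_of_ne hab hac, Equiv.swap_apply_right] at O6
  have I1 := delta_spec hbc f
  have I2 := delta_spec hab f
  have I3 := delta_spec hac f
  have J1 := delta_spec hac (rename (⇑(Equiv.swap a b)) f)
  have J2 := delta_spec hac (rename (⇑(Equiv.swap b c)) f)
  rw [W1] at J2
  have J3 := delta_spec hbc (rename (⇑(Equiv.swap a b)) f)
  have J4 := delta_spec hbc (rename (⇑(Equiv.swap a c)) f)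
  rw [W2] at J4
  have J5 := delta_spec hab (rename (⇑(Equiv.swap a c)) f)
  rw [W3] at J5
  have J6 := delta_spec hab (rename (⇑(Equiv.swap b c)) f)
  rw [W4] at J6
  have hP : ((X a - X b) * ((X b - X c) * (X a - X c)))
        * ((Delta F a b (Delta F b c f) - Delta F b c (Delta F a b f))
          + (Delta F a b (Delta F a c f) - Delta F a c (Delta F a b f))
          + (Delta F a c (Delta F b c f) - Delta F b c (Delta F a c f)))
      = ((X a - X b) * ((X b - X c) * (X a - X c))) * 0 := by
    linear_combination
      (X b - X c) * (X a - X c) * O1 + (X a - X c) * I1 - (X b - X c) * J1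
      - ((X a - X b) * (X a - X c) * O2 + (X a - X c) * I2 - (X a - X b) * J2)
      + ((X b - X c) * (X a - X c) * O3 + (X b - X c) * I3 - (X a - X c) * J3)
      - ((X a - X b) * (X b - X c) * O4 + (X b - X c) * I2 + (X a - X b) * J4)
      + ((X a - X b) * (X b - X c) * O5 + (X a - X b) * I1 + (X b - X c) * J5)
      - ((X a - X b) * (X a - X c) * O6 + (X a - X b) * I3 - (X a - X c) * J6)
  have := mul_left_cancel₀
    (mul_ne_zero (X_sub_ne hab) (mul_ne_zero (X_sub_ne hbc) (X_sub_ne hac))) hP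
  linear_combination this

lemma pderiv_op_comm (i j : Fin n) :
    ((MvPolynomial.pderiv i).toLinearMap : Module.End F (MvPolynomial (Fin n) F))
        * (MvPolynomial.pderiv j).toLinearMap
      = (MvPolynomial.pderiv j).toLinearMap * (MvPolynomial.pderiv i).toLinearMap := by
  refine LinearMap.ext fun f => ?_
  simp only [Module.End.mul_apply, Derivation.coeFn_coe]
  exact pderiv_pderiv_comm i j f

lemma pderiv_op_delta_other {i j k : Fin n} (hki : k ≠ i) (hkj : k ≠ j) :
    ((MvPolynomial.pderiv k).toLinearMap : Module.End F (MvPolynomial (Fin n) F))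
        * Delta F i j = Delta F i j * (MvPolynomial.pderiv k).toLinearMap := by
  refine LinearMap.ext fun f => ?_
  simp only [Module.End.mul_apply, Derivation.coeFn_coe]
  exact pderiv_delta_other hki hkj f

lemma pderiv_op_sum_delta {i j : Fin n} (hij : i ≠ j) :
    (((MvPolynomial.pderiv i).toLinearMap : Module.End F (MvPolynomial (Fin n) F))
        + (MvPolynomial.pderiv j).toLinearMap) * Delta F i j
      = Delta F i j * ((MvPolynomial.pderiv i).toLinearMap
        + (MvPolynomial.pderiv j).toLinearMap) := by
  refine LinearMap.ext fun f => ?_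
  simp only [Module.End.mul_apply, LinearMap.add_apply, Derivation.coeFn_coe, map_add]
  rw [pderiv_sum_delta hij f, map_add]

lemma sum_delta_comm {i j : Fin n} (hij : i ≠ j) :
    (∑ k : Fin n, Delta F i k) * (∑ l : Fin n, Delta F j l)
      = (∑ l : Fin n, Delta F j l) * (∑ k : Fin n, Delta F i k) := by
  rw [← sub_eq_zero]
  have expand : (∑ k : Fin n, Delta F i k) * (∑ l : Fin n, Delta F j l)
      - (∑ l : Fin n, Delta F j l) * (∑ k : Fin n, Delta F i k)
      = ∑ k : Fin n, ∑ l : Fin n,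
          (Delta F i k * Delta F j l - Delta F j l * Delta F i k) := by
    rw [Finset.sum_mul_sum, Finset.sum_mul_sum, Finset.sum_comm (s := Finset.univ)
      (t := Finset.univ) (f := fun l k => Delta F j l * Delta F i k)]
    rw [← Finset.sum_sub_distrib]
    exact Finset.sum_congr rfl fun k _ => by rw [← Finset.sum_sub_distrib]
  rw [expand]
  have hinner : ∀ k : Fin n, k ≠ j →
      (∑ l : Fin n, (Delta F i k * Delta F j l - Delta F j l * Delta F i k))
        = (Delta F i k * Delta F j i - Delta F j i * Delta F i k)
          + (Delta F i k * Delta F j k - Delta F j k * Delta F i k) := by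
    intro k hkj
    rcases eq_or_ne k i with rfl | hki
    · rw [delta_self]
      simp
    · rw [← Finset.sum_subset (Finset.subset_univ {i, k}) ?hz]
      · rw [Finset.sum_pair (Ne.symm hki)]
      · intro l _ hl
        simp only [Finset.mem_insert, Finset.mem_singleton, not_or] at hl
        obtain ⟨hli, hlk⟩ := hl
        rcases eq_or_ne l j with rfl | hlj
        · rw [delta_self]
          simp
        · rw [delta_comm_disjoint (Ne.symm hij) (Ne.symm hkj) hli hlk, sub_self]
  calc (∑ k : Fin n, ∑ l : Fin n, (Delta F i k * Delta F j l - Delta F j l * Delta F i k))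
      = (∑ l : Fin n, (Delta F i j * Delta F j l - Delta F j l * Delta F i j))
        + ∑ k ∈ Finset.univ.erase j, ∑ l : Fin n,
            (Delta F i k * Delta F j l - Delta F j l * Delta F i k) :=
        (Finset.add_sum_erase _ _ (Finset.mem_univ j)).symm
    _ = (∑ l : Fin n, (Delta F i j * Delta F j l - Delta F j l * Delta F i j))
        + ∑ k ∈ Finset.univ.erase j,
            ((Delta F i k * Delta F j i - Delta F j i * Delta F i k)
              + (Delta F i k * Delta F j k - Delta F j k * Delta F i k)) := by
        congr 1
        exact Finset.sum_congr rfl fun k hk => hinner k (Finset.ne_of_mem_erase hk)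
    _ = (∑ l : Fin n, (Delta F i j * Delta F j l - Delta F j l * Delta F i j))
        + ∑ k : Fin n,
            ((Delta F i k * Delta F j i - Delta F j i * Delta F i k)
              + (Delta F i k * Delta F j k - Delta F j k * Delta F i k)) := by
        congr 1
        refine Finset.sum_erase _ ?_
        rw [delta_self j, delta_antisymm i j, endMulNeg, endNegMul, mul_zero, zero_mul]
        abel
    _ = ∑ m : Fin n,
          ((Delta F i j * Delta F j m - Delta F j m * Delta F i j)
            + ((Delta F i m * Delta F j i - Delta F j i * Delta F i m)
              + (Delta F i m * Delta F j m - Delta F j m * Delta F i m))) := by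
        rw [← Finset.sum_add_distrib]
    _ = 0 := by
        refine Finset.sum_eq_zero fun m _ => ?_
        rcases eq_or_ne m i with h | hmi
        · rw [h, delta_self i, delta_antisymm i j, zero_mul, mul_zero, endMulNeg, endNegMul]
          abel
        rcases eq_or_ne m j with h | hmj
        · rw [h, delta_self j, delta_antisymm i j, mul_zero, zero_mul, endMulNeg, endNegMul]
          abel
        · have t := delta_triple (F := F) hij (Ne.symm hmi) (Ne.symm hmj)
          rw [delta_antisymm i j, endMulNeg, endNegMul, ← t]
          abel
set_option maxHeartbeats 1000000 in

lemma dunkl_comm (κ : F) (i j : Fin n) :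
    Dunkl F κ i * Dunkl F κ j = Dunkl F κ j * Dunkl F κ i := by
  rcases eq_or_ne i j with rfl | hij
  · rfl
  rw [dunkl_eq, dunkl_eq]
  set P : Module.End F (MvPolynomial (Fin n) F) := κ • (MvPolynomial.pderiv i).toLinearMap with hP
  set Q : Module.End F (MvPolynomial (Fin n) F) := κ • (MvPolynomial.pderiv j).toLinearMap with hQ
  set S : Module.End F (MvPolynomial (Fin n) F) := ∑ k : Fin n, Delta F i k with hS
  set T : Module.End F (MvPolynomial (Fin n) F) := ∑ l : Fin n, Delta F j l with hT
  have hA : P * Q = Q * P := by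
    refine LinearMap.ext fun f => ?_
    rw [hP, hQ]
    simp only [Module.End.mul_apply, LinearMap.smul_apply, Derivation.coeFn_coe, map_smul]
    rw [pderiv_pderiv_comm]
  have hD : S * T = T * S := sum_delta_comm hij
  have h1 : ((MvPolynomial.pderiv i).toLinearMap : Module.End F (MvPolynomial (Fin n) F)) * T
      - T * (MvPolynomial.pderiv i).toLinearMap
      = (MvPolynomial.pderiv i).toLinearMap * Delta F j i
        - Delta F j i * (MvPolynomial.pderiv i).toLinearMap := by
    rw [hT, Finset.mul_sum, Finset.sum_mul, ← Finset.sum_sub_distrib]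
    refine Finset.sum_eq_single_of_mem i (Finset.mem_univ i) fun l _ hli => ?_
    rcases eq_or_ne l j with rfl | hlj
    · rw [delta_self]; simp
    · rw [pderiv_op_delta_other hij (Ne.symm hli), sub_self]
  have h2 : ((MvPolynomial.pderiv j).toLinearMap : Module.End F (MvPolynomial (Fin n) F)) * S
      - S * (MvPolynomial.pderiv j).toLinearMap
      = (MvPolynomial.pderiv j).toLinearMap * Delta F i j
        - Delta F i j * (MvPolynomial.pderiv j).toLinearMap := by
    rw [hS, Finset.mul_sum, Finset.sum_mul, ← Finset.sum_sub_distrib]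
    refine Finset.sum_eq_single_of_mem j (Finset.mem_univ j) fun l _ hlj => ?_
    rcases eq_or_ne l i with rfl | hli
    · rw [delta_self]; simp
    · rw [pderiv_op_delta_other (Ne.symm hij) (Ne.symm hlj), sub_self]
  have h3' : (((MvPolynomial.pderiv i).toLinearMap : Module.End F (MvPolynomial (Fin n) F))
        * Delta F i j + (MvPolynomial.pderiv j).toLinearMap * Delta F i j)
      - (Delta F i j * (MvPolynomial.pderiv i).toLinearMap
        + Delta F i j * (MvPolynomial.pderiv j).toLinearMap) = 0 := by
    have h3 := pderiv_op_sum_delta (F := F) hij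
    rw [add_mul, mul_add] at h3
    rw [h3, sub_self]
  have hcore : ((MvPolynomial.pderiv i).toLinearMap : Module.End F (MvPolynomial (Fin n) F)) * T
        + S * (MvPolynomial.pderiv j).toLinearMap
      = T * (MvPolynomial.pderiv i).toLinearMap
        + (MvPolynomial.pderiv j).toLinearMap * S := by
    rw [← sub_eq_zero]
    have e : ((MvPolynomial.pderiv i).toLinearMap : Module.End F (MvPolynomial (Fin n) F)) * T
          + S * (MvPolynomial.pderiv j).toLinearMap
          - (T * (MvPolynomial.pderiv i).toLinearMap
            + (MvPolynomial.pderiv j).toLinearMap * S)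
        = ((MvPolynomial.pderiv i).toLinearMap * T - T * (MvPolynomial.pderiv i).toLinearMap)
          - ((MvPolynomial.pderiv j).toLinearMap * S - S * (MvPolynomial.pderiv j).toLinearMap) := by
      abel
    rw [e, h1, h2, delta_antisymm i j, endMulNeg, endNegMul]
    calc -(((MvPolynomial.pderiv i).toLinearMap : Module.End F (MvPolynomial (Fin n) F))
            * Delta F i j) - -(Delta F i j * (MvPolynomial.pderiv i).toLinearMap)
          - ((MvPolynomial.pderiv j).toLinearMap * Delta F i j
            - Delta F i j * (MvPolynomial.pderiv j).toLinearMap)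
        = -((((MvPolynomial.pderiv i).toLinearMap : Module.End F (MvPolynomial (Fin n) F))
              * Delta F i j + (MvPolynomial.pderiv j).toLinearMap * Delta F i j)
            - (Delta F i j * (MvPolynomial.pderiv i).toLinearMap
              + Delta F i j * (MvPolynomial.pderiv j).toLinearMap)) := by abel
      _ = 0 := by rw [h3', neg_zero]
  have hBC : P * T + S * Q = T * P + Q * S := by
    rw [hP, hQ, smul_mul_assoc, smul_mul_assoc, mul_smul_comm, mul_smul_comm,
      ← smul_add, ← smul_add, hcore]
  rw [add_mul, mul_add, mul_add, add_mul, mul_add, mul_add, hA, hD]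
  have e1 : Q * P + P * T + (S * Q + T * S) = Q * P + (P * T + S * Q) + T * S := by abel
  rw [e1, hBC]
  abel

lemma swapOp_comm' (i j : Fin n) : swapOp F i j = swapOp F j i := by
  rw [swapOp, swapOp, Equiv.swap_comm]

lemma swapOp_comm_xY {a b m : Fin n} (hma : m ≠ a) (hmb : m ≠ b) (κ : F) :
    swapOp F a b * (LinearMap.mulLeft F (X m) * Dunkl F κ m)
      = (LinearMap.mulLeft F (X m) * Dunkl F κ m) * swapOp F a b := by
  calc swapOp F a b * (LinearMap.mulLeft F (X m) * Dunkl F κ m)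
      = (swapOp F a b * LinearMap.mulLeft F (X m)) * Dunkl F κ m := (mul_assoc _ _ _).symm
    _ = (LinearMap.mulLeft F (X m) * swapOp F a b) * Dunkl F κ m := by
        rw [swapOp_mulLeft_X, Equiv.swap_apply_of_ne_of_ne hma hmb]
    _ = LinearMap.mulLeft F (X m) * (swapOp F a b * Dunkl F κ m) := mul_assoc _ _ _
    _ = LinearMap.mulLeft F (X m) * (Dunkl F κ m * swapOp F a b) := by
        rw [swapOp_dunkl_other hma hmb]
    _ = (LinearMap.mulLeft F (X m) * Dunkl F κ m) * swapOp F a b := (mul_assoc _ _ _).symm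

lemma swapOp_sum_comm {k i j : Fin n} (hki : k ≠ i) (hkj : k < j) (hij : i < j) :
    swapOp F k i * (∑ l ∈ Finset.univ.filter (fun l => l < j), swapOp F l j)
      = (∑ l ∈ Finset.univ.filter (fun l => l < j), swapOp F l j) * swapOp F k i := by
  rw [Finset.mul_sum, Finset.sum_mul]
  refine Finset.sum_equiv (Equiv.swap k i) ?_ ?_
  · intro l
    simp only [Finset.mem_filter, Finset.mem_univ, true_and]
    rcases eq_or_ne l k with rfl | hlk
    · rw [Equiv.swap_apply_left]
      exact ⟨fun _ => hij, fun _ => hkj⟩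
    rcases eq_or_ne l i with rfl | hli
    · rw [Equiv.swap_apply_right]
      exact ⟨fun _ => hkj, fun _ => hij⟩
    · rw [Equiv.swap_apply_of_ne_of_ne hlk hli]
  · intro l hl
    have hjk : j ≠ k := (ne_of_gt hkj)
    have hji : j ≠ i := (ne_of_gt hij)
    rw [swapOp, swapOp, swapOp, permOp_mul, permOp_mul]
    congr 1
    rw [swap_conj (Equiv.swap k i) l j, Equiv.swap_apply_of_ne_of_ne hjk hji]

lemma cher_comm_lt {i j : Fin n} (hij : i < j) (κ : F) :
    Cher F κ i * Cher F κ j = Cher F κ j * Cher F κ i := by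
  have hne : i ≠ j := ne_of_lt hij
  simp only [Cher]
  set x₁ := LinearMap.mulLeft F (X i : MvPolynomial (Fin n) F) with hx₁
  set x₂ := LinearMap.mulLeft F (X j : MvPolynomial (Fin n) F) with hx₂
  set Y₁ := Dunkl F κ i with hY₁
  set Y₂ := Dunkl F κ j with hY₂
  set s : Module.End F (MvPolynomial (Fin n) F) := swapOp F i j with hs
  set A₁ := ∑ k ∈ Finset.univ.filter (fun k => k < i), swapOp F k i with hA₁
  set A₂ := ∑ k ∈ Finset.univ.filter (fun k => k < j), swapOp F k j with hA₂
  have es2 : s * Y₁ = Y₂ * s := swapOp_dunkl_left i j κ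
  have es1 : s * Y₂ = Y₁ * s := by
    have h := swapOp_dunkl_left j i κ
    rw [swapOp_comm' j i] at h
    exact h
  have esx1 : s * x₁ = x₂ * s := by
    rw [hs, hx₁, hx₂, swapOp_mulLeft_X, Equiv.swap_apply_left]
  have eYx : Y₁ * x₂ = x₂ * Y₁ - s := dunkl_mulLeft_ne hne κ
  have eYx' : Y₂ * x₁ = x₁ * Y₂ - s := by
    have h := dunkl_mulLeft_ne (Ne.symm hne) κ
    rw [swapOp_comm' j i] at h
    exact h
  have hB12 : (x₁ * Y₁) * (x₂ * Y₂) = x₁ * x₂ * (Y₁ * Y₂) - x₁ * (Y₁ * s) := by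
    calc (x₁ * Y₁) * (x₂ * Y₂) = x₁ * (Y₁ * x₂) * Y₂ := by simp only [mul_assoc]
      _ = x₁ * (x₂ * Y₁ - s) * Y₂ := by rw [eYx]
      _ = x₁ * x₂ * (Y₁ * Y₂) - x₁ * (s * Y₂) := by
          rw [mul_sub, sub_mul]; simp only [mul_assoc]
      _ = x₁ * x₂ * (Y₁ * Y₂) - x₁ * (Y₁ * s) := by rw [es1]
  have hB21 : (x₂ * Y₂) * (x₁ * Y₁) = x₁ * x₂ * (Y₁ * Y₂) - x₂ * (Y₂ * s) := by
    calc (x₂ * Y₂) * (x₁ * Y₁) = x₂ * (Y₂ * x₁) * Y₁ := by simp only [mul_assoc]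
      _ = x₂ * (x₁ * Y₂ - s) * Y₁ := by rw [eYx']
      _ = x₂ * x₁ * (Y₂ * Y₁) - x₂ * (s * Y₁) := by
          rw [mul_sub, sub_mul]; simp only [mul_assoc]
      _ = x₂ * x₁ * (Y₂ * Y₁) - x₂ * (Y₂ * s) := by rw [es2]
      _ = x₁ * x₂ * (Y₁ * Y₂) - x₂ * (Y₂ * s) := by
          rw [hx₁, hx₂, hY₁, hY₂, mulLeft_X_comm (X j) (X i), dunkl_comm κ j i]
  have hG2 : (x₁ * Y₁) * A₂ - A₂ * (x₁ * Y₁) = x₁ * (Y₁ * s) - x₂ * (Y₂ * s) := by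
    rw [hA₂, Finset.mul_sum, Finset.sum_mul, ← Finset.sum_sub_distrib]
    rw [Finset.sum_eq_single_of_mem i
      (by simp only [Finset.mem_filter, Finset.mem_univ, true_and]; exact hij) ?_]
    · have h1 : (x₁ * Y₁) * swapOp F i j = x₁ * (Y₁ * s) := by rw [hs]; noncomm_ring
      have h2 : swapOp F i j * (x₁ * Y₁) = x₂ * (Y₂ * s) := by
        calc swapOp F i j * (x₁ * Y₁) = (s * x₁) * Y₁ := by rw [hs, mul_assoc]
          _ = x₂ * (s * Y₁) := by rw [esx1, mul_assoc]
          _ = x₂ * (Y₂ * s) := by rw [es2]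
      rw [h1, h2]
    · intro k hk hki
      have hkj : k < j := (Finset.mem_filter.mp hk).2
      have h := swapOp_comm_xY (a := k) (b := j) (m := i) (Ne.symm hki) hne κ
      rw [← hx₁, ← hY₁] at h
      rw [h, sub_self]
  have hG3 : A₁ * (x₂ * Y₂) = (x₂ * Y₂) * A₁ := by
    rw [hA₁, Finset.sum_mul, Finset.mul_sum]
    refine Finset.sum_congr rfl fun k hk => ?_
    have hki : k < i := (Finset.mem_filter.mp hk).2
    have h := swapOp_comm_xY (a := k) (b := i) (m := j)
      (ne_of_gt (hki.trans hij)) (ne_of_gt hij) κ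
    rw [← hx₂, ← hY₂] at h
    exact h
  have hG4 : A₁ * A₂ = A₂ * A₁ := by
    rw [hA₁, Finset.sum_mul]
    rw [hA₂]
    calc ∑ k ∈ Finset.univ.filter (fun k => k < i),
          swapOp F k i * (∑ l ∈ Finset.univ.filter (fun l => l < j), swapOp F l j)
        = ∑ k ∈ Finset.univ.filter (fun k => k < i),
          (∑ l ∈ Finset.univ.filter (fun l => l < j), swapOp F l j) * swapOp F k i := by
          refine Finset.sum_congr rfl fun k hk => ?_
          have hki : k < i := (Finset.mem_filter.mp hk).2
          exact swapOp_sum_comm (ne_of_lt hki) (hki.trans hij) hij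
      _ = (∑ l ∈ Finset.univ.filter (fun l => l < j), swapOp F l j)
          * ∑ k ∈ Finset.univ.filter (fun k => k < i), swapOp F k i := by
          rw [Finset.mul_sum]
  -- assemble
  have hG1 : (x₁ * Y₁) * (x₂ * Y₂)
      = (x₂ * Y₂) * (x₁ * Y₁) + (x₂ * (Y₂ * s) - x₁ * (Y₁ * s)) := by
    rw [hB12, hB21]; abel
  have hG2' : (x₁ * Y₁) * A₂ = A₂ * (x₁ * Y₁) + (x₁ * (Y₁ * s) - x₂ * (Y₂ * s)) := by
    rw [← hG2]; abel
  rw [add_mul, mul_add, mul_add, add_mul, mul_add, mul_add, hG1, hG2', hG3, hG4]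
  abel

theorem stmt10' (κ : F) (i j : Fin n) :
    Cher F κ i * Cher F κ j = Cher F κ j * Cher F κ i := by
  rcases lt_trichotomy i j with h | h | h
  · exact cher_comm_lt h κ
  · rw [h]
  · exact (cher_comm_lt h κ).symm

end Aux

theorem stmt10 (n : ℕ) (hn : 2 ≤ n) (κ : F) (i j : Fin n) :
    Cher F κ i * Cher F κ j = Cher F κ j * Cher F κ i := by
  exact stmt10' (F := F) κ i j
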